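/- Let e ≥ 3 be an integer and let u ∈ ℂ⟦X⟧ have nonzero constant coefficient. Set z = 1 + X^e · u and let z′ be its formal derivative. Then there exists g ∈ ℂ⟦X⟧ such that z³·(z − 1)⁴·g = (z′)⁶, and the order of g equals 2e − 6. -/

import Mathlib

/-!
Write `z = 1 + X^e u`. Then `z - 1 = X^e u` and `z' = X^(e-1) (e u + X u')`, where `u` and `z` are
units, and so is `e u + X u'` in characteristic zero. Hence
`g = (z')^m / (z^a (z-1)^b)` is `X^(m(e-1) - be)` times a unit, a genuine power series as soon
as `be ≤ m(e-1)`; for `(a, b, m) = (3, 4, 6)` this is `e ≥ 3`, giving order `2e - 6`.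
-/

open PowerSeries

namespace PowerSeries

theorem derivative_X_pow_succ_mul {R : Type*} [CommSemiring R] (n : ℕ) (u : R⟦X⟧) :
    derivative R (X ^ (n + 1) * u) = X ^ n * ((n + 1 : R⟦X⟧) * u + X * derivative R u) := by
  rw [Derivation.leibniz, Derivation.leibniz_pow, derivative_X, Nat.add_sub_cancel, smul_eq_mul,
    smul_eq_mul, nsmul_eq_mul]
  push_cast
  ring

theorem order_X_pow_mul_of_constantCoeff_ne_zero {R : Type*} [Semiring R] [NoZeroDivisors R]
    [Nontrivial R] (n : ℕ) {v : R⟦X⟧} (hv : constantCoeff v ≠ 0) :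
    (X ^ n * v : R⟦X⟧).order = n := by
  rw [order_mul, order_X_pow, not_imp_comm.mp order_ne_zero_iff_constCoeff_eq_zero.mp hv, add_zero]

theorem exists_mul_eq_derivative_pow_of_one_add_X_pow_mul {k : Type*} [Field k] [CharZero k]
    (a b m e : ℕ) (he : 0 < e) (hbm : b * e ≤ m * (e - 1)) (u : k⟦X⟧)
    (hu : constantCoeff u ≠ 0) :
    ∃ g : k⟦X⟧,
      (1 + X ^ e * u) ^ a * ((1 + X ^ e * u) - 1) ^ b * g = (derivative k (1 + X ^ e * u)) ^ m ∧
      g.order = (m * (e - 1) - b * e : ℕ) := by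
  obtain ⟨n, rfl⟩ := Nat.exists_eq_add_of_lt he
  simp only [zero_add, Nat.add_sub_cancel] at hbm ⊢
  set w : k⟦X⟧ := (n + 1 : k⟦X⟧) * u + X * derivative k u
  set h : k⟦X⟧ := (1 + X ^ (n + 1) * u) ^ a * u ^ b with h_def
  have hw : constantCoeff w ≠ 0 := by
    simp only [w, map_add, map_mul, map_natCast, map_one, constantCoeff_X, zero_mul, add_zero]
    exact mul_ne_zero (by exact_mod_cast n.succ_ne_zero) hu
  have hh : constantCoeff h ≠ 0 := by
    simp [h, hu]
  refine ⟨X ^ (m * n - b * (n + 1)) * (w ^ m * h⁻¹), ?_,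
    order_X_pow_mul_of_constantCoeff_ne_zero _ (by simp [hw, hh])⟩
  have hz' : derivative k (1 + X ^ (n + 1) * u) = X ^ n * w := by
    rw [map_add, Derivation.map_one_eq_zero, zero_add, derivative_X_pow_succ_mul]
  rw [hz', add_sub_cancel_left]
  calc _ = X ^ (b * (n + 1) + (m * n - b * (n + 1))) * w ^ m * (h * h⁻¹) := by
        rw [h_def]; ring
    _ = (X ^ n * w) ^ m := by
        rw [PowerSeries.mul_inv_cancel h hh, Nat.add_sub_cancel' hbm, mul_one, mul_pow, pow_mul']

end PowerSeries

/-- For `z = 1 + X^e · u` with `u(0) ≠ 0` and `e ≥ 3`, the series `g` with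
`z³(z-1)⁴g = (z′)⁶` exists and has order exactly `2e - 6`: the degree-6 symmetric
log tensor with pole orders `3, 4, 5` at `0, 1, ∞` pulls back regularly and
nontrivially along a multiplicity-`e` fiber component over `z = 1`. -/
theorem pullback_six_tensor_order_at_one (e : ℕ) (he : 3 ≤ e) (u : PowerSeries ℂ)
    (hu : PowerSeries.constantCoeff u ≠ 0) :
    ∃ g : PowerSeries ℂ,
      (1 + PowerSeries.X ^ e * u) ^ 3 * ((1 + PowerSeries.X ^ e * u) - 1) ^ 4 * g =
        (PowerSeries.derivative ℂ (1 + PowerSeries.X ^ e * u)) ^ 6 ∧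
      g.order = (2 * e - 6 : ℕ) := by
  obtain ⟨g, hg, hord⟩ :=
    exists_mul_eq_derivative_pow_of_one_add_X_pow_mul 3 4 6 e (by omega) (by omega) u hu
  exact ⟨g, hg, by rw [hord]; congr 1; omega⟩
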